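/- If f is a geodesic Leech labeling of the cycle graph C_10 on 10 vertices, then f(e) ≤ 31 for every edge e of C_10. -/

import Mathlib

open SimpleGraph Finset

/-- A walk in `G` is a *geodesic walk* if it is a nontrivial path whose length equals
the distance in `G` between its endpoints. -/
def SimpleGraph.IsGeodesicWalk {V : Type*} (G : SimpleGraph V) {u v : V}
    (p : G.Walk u v) : Prop :=
  p.IsPath ∧ p.length = G.dist u v ∧ 0 < p.length

/-- The geodesic paths of `G`, where a path and its reverse are identified by
recording the (finite) set of edges of the path.  (A nontrivial path is determined,
up to reversal, by its edge set.) -/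
def SimpleGraph.geodesicPathSets {V : Type*} [DecidableEq V] (G : SimpleGraph V) :
    Set (Finset (Sym2 V)) :=
  {S | ∃ (u v : V) (p : G.Walk u v), G.IsGeodesicWalk p ∧ p.edges.toFinset = S}

/-- The geodesic path number `t_gp(G)`: the number of geodesic paths of `G`. -/
noncomputable def SimpleGraph.tgp {V : Type*} [DecidableEq V] (G : SimpleGraph V) : ℕ :=
  G.geodesicPathSets.ncard

/-- `f` is a geodesic Leech labeling of `G`: an edge labeling by positive integers such
that the weights of the geodesic paths of `G` are exactly `1, 2, …, t_gp(G)`,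
each occurring exactly once. -/
def SimpleGraph.IsGeodesicLeechLabeling {V : Type*} [DecidableEq V] (G : SimpleGraph V)
    (f : Sym2 V → ℕ) : Prop :=
  (∀ e ∈ G.edgeSet, 1 ≤ f e) ∧
    Set.BijOn (fun S => ∑ e ∈ S, f e) G.geodesicPathSets (Set.Icc 1 G.tgp)

/-!
The geodesic paths of `C_10` are the `50` arcs of `1` to `5` consecutive edges. Writing `g m`
for the label of the edge `{m, m + 1}`, every edge lies on `1 + 2 + 3 + 4 + 5 = 15` of these
arcs, so adding up all weights gives `15 * ∑ g = 1 + ⋯ + 50 = 1275`, i.e. `∑ g = 85`. Two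
antipodal arcs of length `5` make up the whole cycle, so each of them weighs at least
`85 - 50 = 35`. If some edge had label `g m ≥ 32`, the weights `1, …, 31` would all be carried by
arcs of length at most `4` avoiding that edge, and there are only `30` of those.
-/

open Fin.NatCast Fin.CommRing

namespace SimpleGraph

variable {n : ℕ}

theorem cycleGraph_adj_iff_eq_add_one {u v : Fin (n + 2)} :
    (cycleGraph (n + 2)).Adj u v ↔ v = u + 1 ∨ u = v + 1 := by
  rw [cycleGraph_adj, sub_eq_iff_eq_add', sub_eq_iff_eq_add', or_comm]

theorem exists_eq_of_mem_edgeSet_cycleGraph {e : Sym2 (Fin (n + 2))}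
    (he : e ∈ (cycleGraph (n + 2)).edgeSet) : ∃ m, e = s(m, m + 1) := by
  induction e using Sym2.ind with
  | _ u v =>
    rcases cycleGraph_adj_iff_eq_add_one.1 he with h | h
    · exact ⟨u, by simp only at h; rw [h]⟩
    · exact ⟨v, by simp only at h; rw [h, Sym2.eq_swap]⟩

def cycleArc (i : Fin (n + 2)) (k : ℕ) : Finset (Sym2 (Fin (n + 2))) :=
  (range k).image fun j : ℕ => s(i + (j : Fin (n + 2)), i + (j : Fin (n + 2)) + 1)

@[simp]
theorem cycleArc_zero (i : Fin (n + 2)) : cycleArc i 0 = ∅ := by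
  simp [cycleArc]

theorem cycleArc_succ (i : Fin (n + 2)) (k : ℕ) :
    cycleArc i (k + 1) = insert s(i + k, i + k + 1) (cycleArc i k) := by
  rw [cycleArc, range_add_one, image_insert, cycleArc]

theorem cycleArc_succ' (i : Fin (n + 2)) (k : ℕ) :
    cycleArc i (k + 1) = insert s(i, i + 1) (cycleArc (i + 1) k) := by
  rw [cycleArc, range_add_one', image_insert, map_eq_image, image_image, cycleArc]
  congr 1
  · simp
  · refine image_congr fun j _ => ?_
    change s(i + ((j + 1 : ℕ) : Fin (n + 2)), i + ((j + 1 : ℕ) : Fin (n + 2)) + 1) = _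
    push_cast
    congr 1 <;> ring

theorem mem_support_of_edges_toFinset_eq_cycleArc {u v a : Fin (n + 2)} {k j : ℕ}
    {p : (cycleGraph (n + 2)).Walk u v} (hp : p.edges.toFinset = cycleArc a k) (hj : j < k) :
    a + j ∈ p.support ∧ a + j + 1 ∈ p.support := by
  have he : s(a + j, a + j + 1) ∈ p.edges := by
    rw [← List.mem_toFinset, hp]
    exact mem_image_of_mem _ (mem_range.2 hj)
  exact ⟨p.fst_mem_support_of_mem_edges he, p.snd_mem_support_of_mem_edges he⟩

theorem Walk.IsPath.edges_toFinset_eq_cycleArc {u v : Fin (n + 2)}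
    {p : (cycleGraph (n + 2)).Walk u v} (hp : p.IsPath) :
    (v = u + p.length ∧ p.edges.toFinset = cycleArc u p.length) ∨
      (u = v + p.length ∧ p.edges.toFinset = cycleArc v p.length) := by
  induction p with
  | nil => simp
  | @cons u w v h q ih =>
    obtain ⟨hq, hu⟩ := Walk.cons_isPath_iff _ _ |>.1 hp
    simp only [Walk.length_cons, Walk.edges_cons, List.toFinset_cons, Nat.cast_add, Nat.cast_one]
    rcases (q.length).eq_zero_or_pos with h0 | hpos
    · obtain rfl := Walk.eq_of_length_eq_zero h0
      rw [List.eq_nil_of_length_eq_zero (q.length_edges.trans h0), h0]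
      rcases cycleGraph_adj_iff_eq_add_one.1 h with rfl | rfl
      · left; simp [cycleArc_succ]
      · right; simp [cycleArc_succ, Sym2.eq_swap]
    -- In the two mixed cases the path turns around and `u` reappears in `q`.
    rcases cycleGraph_adj_iff_eq_add_one.1 h with rfl | rfl <;>
      rcases ih hq with ⟨hv, he⟩ | ⟨hw, he⟩
    · left
      rw [he, cycleArc_succ']
      exact ⟨by linear_combination hv, rfl⟩
    · refine absurd ?_ hu
      convert (mem_support_of_edges_toFinset_eq_cycleArc he (Nat.sub_lt hpos one_pos)).1
      rw [Nat.cast_pred hpos]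
      linear_combination hw
    · refine absurd ?_ hu
      simpa using (mem_support_of_edges_toFinset_eq_cycleArc he hpos).2
    · right
      rw [he, cycleArc_succ, ← hw, Sym2.eq_swap]
      exact ⟨by linear_combination hw, rfl⟩

def cycleArcWalk (i : Fin (n + 2)) : (k : ℕ) → (cycleGraph (n + 2)).Walk i (i + k)
  | 0 => Walk.nil.copy rfl (by simp)
  | k + 1 => (Walk.cons (cycleGraph_adj_iff_eq_add_one.2 (Or.inl rfl))
      (cycleArcWalk (i + 1) k)).copy rfl (by push_cast; ring)

@[simp]
theorem length_cycleArcWalk (i : Fin (n + 2)) (k : ℕ) : (cycleArcWalk i k).length = k := by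
  induction k generalizing i with
  | zero => simp [cycleArcWalk]
  | succ k ih => simp [cycleArcWalk, ih]

theorem edges_toFinset_cycleArcWalk (i : Fin (n + 2)) (k : ℕ) :
    (cycleArcWalk i k).edges.toFinset = cycleArc i k := by
  induction k generalizing i with
  | zero => simp [cycleArcWalk]
  | succ k ih => simp [cycleArcWalk, ih, cycleArc_succ']

theorem exists_eq_add_of_mem_support_cycleArcWalk {i v : Fin (n + 2)} {k : ℕ}
    (hv : v ∈ (cycleArcWalk i k).support) : ∃ j ≤ k, v = i + j := by
  induction k generalizing i with
  | zero => exact ⟨0, le_rfl, by simpa [cycleArcWalk] using hv⟩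
  | succ k ih =>
    simp only [cycleArcWalk, Walk.support_copy, Walk.support_cons, List.mem_cons] at hv
    rcases hv with rfl | hv
    · exact ⟨0, (k + 1).zero_le, by simp⟩
    · obtain ⟨j, hj, rfl⟩ := ih hv
      exact ⟨j + 1, by omega, by push_cast; ring⟩

theorem isPath_cycleArcWalk (i : Fin (n + 2)) {k : ℕ} (hk : k < n + 2) :
    (cycleArcWalk i k).IsPath := by
  induction k generalizing i with
  | zero => simp [cycleArcWalk]
  | succ k ih =>
    rw [cycleArcWalk, Walk.isPath_copy, Walk.cons_isPath_iff]
    refine ⟨ih _ (by omega), fun hi => ?_⟩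
    obtain ⟨j, hj, hij⟩ := exists_eq_add_of_mem_support_cycleArcWalk hi
    have : ((j + 1 : ℕ) : Fin (n + 2)) = 0 := by
      push_cast
      linear_combination -hij
    have := Nat.le_of_dvd j.succ_pos (Fin.natCast_eq_zero.1 this)
    omega

theorem Walk.exists_cycleGraph_steps {u v : Fin (n + 2)} (p : (cycleGraph (n + 2)).Walk u v) :
    ∃ a b : ℕ, a + b = p.length ∧ v + b = u + a := by
  induction p with
  | nil => exact ⟨0, 0, rfl, rfl⟩
  | @cons u w v h q ih =>
    obtain ⟨a, b, hab, hv⟩ := ih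
    rcases cycleGraph_adj_iff_eq_add_one.1 h with rfl | rfl
    · exact ⟨a + 1, b, by simp [← hab]; omega, by push_cast; linear_combination hv⟩
    · exact ⟨a, b + 1, by simp [← hab]; omega, by push_cast; linear_combination hv⟩

theorem Walk.le_length_of_cycleGraph {u : Fin (n + 2)} {k : ℕ}
    (p : (cycleGraph (n + 2)).Walk u (u + k)) (hk : 2 * k ≤ n + 2) : k ≤ p.length := by
  obtain ⟨a, b, hab, hp⟩ := p.exists_cycleGraph_steps
  have hmod : (k + b) % (n + 2) = a % (n + 2) := by
    rw [← Fin.val_natCast, ← Fin.val_natCast a, Fin.val_inj]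
    push_cast
    linear_combination hp
  by_contra! hlt
  rw [Nat.mod_eq_of_lt (by omega), Nat.mod_eq_of_lt (by omega)] at hmod
  omega

theorem cycleGraph_dist_add_le (u : Fin (n + 2)) (k : ℕ) :
    (cycleGraph (n + 2)).dist u (u + k) ≤ k :=
  (dist_le _).trans_eq (length_cycleArcWalk u k)

theorem cycleGraph_dist_add {k : ℕ} (u : Fin (n + 2)) (hk : 2 * k ≤ n + 2) :
    (cycleGraph (n + 2)).dist u (u + k) = k := by
  refine le_antisymm (cycleGraph_dist_add_le u k) ?_
  obtain ⟨p, hp⟩ := cycleGraph_connected.exists_walk_length_eq_dist u (u + k)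
  exact hp ▸ p.le_length_of_cycleGraph hk

theorem two_mul_cycleGraph_dist_le (u v : Fin (n + 2)) :
    2 * (cycleGraph (n + 2)).dist u v ≤ n + 2 := by
  have hv := cycleGraph_dist_add_le u (v - u).val
  have hu := cycleGraph_dist_add_le v (u - v).val
  simp only [Fin.cast_val_eq_self, add_sub_cancel] at hv hu
  have hsum : (v - u).val + (u - v).val ≤ n + 2 := by
    rw [← neg_sub v u, Fin.val_neg']
    have := (v - u).isLt
    have := Nat.mod_le (n + 2 - (v - u).val) (n + 2)
    omega
  rw [dist_comm] at hu
  omega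

def cycleArcIndex (n : ℕ) : Finset (Fin (n + 2) × ℕ) := univ ×ˢ Icc 1 ((n + 2) / 2)

theorem cycleGraph_geodesicPathSets :
    (cycleGraph (n + 2)).geodesicPathSets =
      (fun q => cycleArc q.1 q.2) '' (cycleArcIndex n : Set (Fin (n + 2) × ℕ)) := by
  ext S
  simp only [cycleArcIndex, coe_product, coe_univ, coe_Icc, Set.mem_image, Set.mem_prod,
    Set.mem_univ, Set.mem_Icc, true_and, Prod.exists]
  constructor
  · rintro ⟨u, v, p, ⟨hp, hlen, hpos⟩, rfl⟩
    have hle : 2 * p.length ≤ n + 2 := hlen ▸ two_mul_cycleGraph_dist_le u v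
    rcases hp.edges_toFinset_eq_cycleArc with ⟨-, he⟩ | ⟨-, he⟩
    · exact ⟨u, p.length, ⟨hpos, by omega⟩, he.symm⟩
    · exact ⟨v, p.length, ⟨hpos, by omega⟩, he.symm⟩
  · rintro ⟨i, k, ⟨hk1, hk2⟩, rfl⟩
    refine ⟨i, i + k, cycleArcWalk i k, ⟨isPath_cycleArcWalk i (by omega), ?_, ?_⟩,
      edges_toFinset_cycleArcWalk i k⟩
    · rw [length_cycleArcWalk, cycleGraph_dist_add i (by omega)]
    · rw [length_cycleArcWalk]; omega

theorem sum_cycleArc {M : Type*} [AddCommMonoid M] (f : Sym2 (Fin (n + 3)) → M)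
    (i : Fin (n + 3)) {k : ℕ} (hk : k ≤ n + 3) :
    ∑ e ∈ cycleArc i k, f e = ∑ j ∈ range k, f s(i + j, i + j + 1) := by
  refine sum_image fun j hj j' hj' hjj' => ?_
  simp only [coe_range, Set.mem_Iio] at hj hj'
  rcases Sym2.eq_iff.1 hjj' with ⟨h, -⟩ | ⟨h₁, h₂⟩
  · have := congrArg Fin.val (add_left_cancel h)
    rwa [Fin.val_natCast, Fin.val_natCast, Nat.mod_eq_of_lt (by omega),
      Nat.mod_eq_of_lt (by omega)] at this
  · have h2 : ((2 : ℕ) : Fin (n + 3)) = 0 := by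
      push_cast
      linear_combination h₂ - h₁
    have := Nat.le_of_dvd two_pos (Fin.natCast_eq_zero.1 h2)
    omega

end SimpleGraph

section arcWeight

variable {N : ℕ} [NeZero N]

def arcWeight (g : Fin N → ℕ) (i : Fin N) (k : ℕ) : ℕ := ∑ j ∈ range k, g (i + (j : Fin N))

theorem arcWeight_add (g : Fin N → ℕ) (i : Fin N) (a b : ℕ) :
    arcWeight g i (a + b) = arcWeight g i a + arcWeight g (i + a) b := by
  simp only [arcWeight, sum_range_add, Nat.cast_add, add_assoc]

theorem arcWeight_self (g : Fin N → ℕ) (i : Fin N) : arcWeight g i N = ∑ m, g m := by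
  rw [arcWeight, ← Fin.sum_univ_eq_sum_range (fun j => g (i + j)) N]
  simp only [Fin.cast_val_eq_self]
  exact Fintype.sum_equiv (Equiv.addLeft i) _ _ fun _ => rfl

theorem sum_arcWeight_univ (g : Fin N → ℕ) (k : ℕ) :
    ∑ i, arcWeight g i k = k * ∑ m, g m := by
  simp only [arcWeight]
  rw [sum_comm]
  simp only [fun j : ℕ => Fintype.sum_equiv (Equiv.addRight (j : Fin N)) (fun i => g (i + j)) g
    fun _ => rfl, sum_const, card_range, smul_eq_mul]

end arcWeight

theorem sum_arcWeight_cycleArcIndex {n : ℕ} (g : Fin (n + 2) → ℕ) :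
    ∑ q ∈ cycleArcIndex n, arcWeight g q.1 q.2 = (∑ k ∈ Icc 1 ((n + 2) / 2), k) * ∑ m, g m := by
  rw [cycleArcIndex, sum_product, sum_comm, sum_mul]
  exact sum_congr rfl fun k _ => sum_arcWeight_univ g k

theorem injOn_cycleArc_cycleArcIndex_eight :
    Set.InjOn (fun q => cycleArc q.1 q.2) (cycleArcIndex 8 : Set (Fin 10 × ℕ)) := by
  have : ∀ i i' : Fin 10, ∀ k ∈ Icc 1 5, ∀ k' ∈ Icc 1 5,
      cycleArc i k ⊆ cycleArc i' k' → cycleArc i' k' ⊆ cycleArc i k → i = i' ∧ k = k' := by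
    decide
  rintro ⟨i, k⟩ hq ⟨i', k'⟩ hq' h
  simp only [cycleArcIndex, coe_product, coe_univ, Set.mem_prod, Set.mem_univ, true_and,
    mem_coe] at hq hq'
  obtain ⟨rfl, rfl⟩ := this i i' k hq k' hq' h.le h.ge
  rfl

theorem card_filter_cycleArcIndex_eight_avoiding (m : Fin 10) :
    #{q ∈ cycleArcIndex 8 | q.2 ≤ 4 ∧ ∀ j ∈ range q.2, q.1 + (j : Fin 10) ≠ m} = 30 := by
  revert m
  decide

theorem bijOn_arcWeight_of_isGeodesicLeechLabeling {f : Sym2 (Fin 10) → ℕ}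
    (hf : (cycleGraph 10).IsGeodesicLeechLabeling f) :
    Set.BijOn (fun q => arcWeight (fun m => f s(m, m + 1)) q.1 q.2)
      (cycleArcIndex 8 : Set (Fin 10 × ℕ)) (Set.Icc 1 50) := by
  have hgeo := cycleGraph_geodesicPathSets (n := 8)
  have htgp : (cycleGraph 10).tgp = 50 := by
    rw [tgp, hgeo, injOn_cycleArc_cycleArcIndex_eight.ncard_image, Set.ncard_coe_finset]
    rfl
  have hbij := hf.2
  rw [hgeo, htgp] at hbij
  refine (hbij.comp injOn_cycleArc_cycleArcIndex_eight.bijOn_image).congr fun q hq => ?_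
  have hk : q.2 ≤ 5 := (mem_Icc.1 (mem_product.1 hq).2).2
  exact sum_cycleArc _ q.1 (by omega)

theorem sum_eq_85_of_bijOn_arcWeight {g : Fin 10 → ℕ}
    (hg : Set.BijOn (fun q => arcWeight g q.1 q.2) (cycleArcIndex 8 : Set (Fin 10 × ℕ))
      (Set.Icc 1 50)) : ∑ m, g m = 85 := by
  have hg' : Set.BijOn _ _ (Icc 1 50 : Set ℕ) := coe_Icc 1 50 ▸ hg
  have h := sum_nbij (g := fun v => v) _ (fun q hq => hg'.mapsTo hq) hg'.injOn hg'.surjOn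
    fun _ _ => rfl
  rw [sum_arcWeight_cycleArcIndex, show ∑ k ∈ Icc 1 ((8 + 2) / 2), k = 15 by decide,
    show ∑ k ∈ Icc 1 50, k = 1275 by decide] at h
  have h' : 15 * ∑ m, g m = 15 * 85 := h
  omega

theorem thirtyfive_le_arcWeight_five_of_bijOn {g : Fin 10 → ℕ}
    (hg : Set.BijOn (fun q => arcWeight g q.1 q.2) (cycleArcIndex 8 : Set (Fin 10 × ℕ))
      (Set.Icc 1 50)) (i : Fin 10) : 35 ≤ arcWeight g i 5 := by
  have hanti : arcWeight g i 10 = arcWeight g i 5 + arcWeight g (i + 5) 5 :=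
    arcWeight_add g i 5 5
  rw [arcWeight_self, sum_eq_85_of_bijOn_arcWeight hg] at hanti
  have hfar : arcWeight g (i + 5) 5 ≤ 50 :=
    (hg.mapsTo (show (i + 5, 5) ∈ (cycleArcIndex 8 : Set (Fin 10 × ℕ)) by
      simp [cycleArcIndex])).2
  omega

theorem le_31_of_bijOn_arcWeight {g : Fin 10 → ℕ}
    (hg : Set.BijOn (fun q => arcWeight g q.1 q.2) (cycleArcIndex 8 : Set (Fin 10 × ℕ))
      (Set.Icc 1 50)) (m : Fin 10) : g m ≤ 31 := by
  by_contra! hm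
  have hsub : Icc 1 31 ⊆
      {q ∈ cycleArcIndex 8 | q.2 ≤ 4 ∧ ∀ j ∈ range q.2, q.1 + (j : Fin 10) ≠ m}.image
        fun q => arcWeight g q.1 q.2 := by
    intro v hv
    rw [mem_Icc] at hv
    obtain ⟨q, hq, rfl⟩ := hg.surjOn (show v ∈ Set.Icc 1 50 from ⟨hv.1, by omega⟩)
    dsimp only at hv
    refine mem_image_of_mem _ (mem_filter.2 ⟨hq, ?_, fun j hj hjm => ?_⟩)
    · by_contra! hlong
      have hq5 : q.2 = 5 := by
        have := (mem_Icc.1 (mem_product.1 hq).2).2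
        omega
      have := thirtyfive_le_arcWeight_five_of_bijOn hg q.1
      rw [← hq5] at this
      omega
    · have : g m ≤ arcWeight g q.1 q.2 :=
        hjm ▸ single_le_sum (f := fun j : ℕ => g (q.1 + j)) (fun _ _ => Nat.zero_le _) hj
      omega
  have := (card_le_card hsub).trans card_image_le
  rw [card_filter_cycleArcIndex_eight_avoiding, Nat.card_Icc] at this
  omega

/-- If `f` is a geodesic Leech labeling of the cycle on `10` vertices, then `f e ≤ 31`
for every edge `e` of the cycle. -/
theorem statement_9 (f : Sym2 (Fin 10) → ℕ)
    (hf : (SimpleGraph.cycleGraph 10).IsGeodesicLeechLabeling f) :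
    ∀ e ∈ (SimpleGraph.cycleGraph 10).edgeSet, f e ≤ 31 := by
  intro e he
  obtain ⟨m, rfl⟩ := exists_eq_of_mem_edgeSet_cycleGraph he
  exact le_31_of_bijOn_arcWeight (bijOn_arcWeight_of_isGeodesicLeechLabeling hf) m
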